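/- Let R be a nonzero commutative ring with identity, let 2 ≤ k < n, let f_i : R^{2i-2} → R for 2 ≤ i ≤ n be arbitrary functions, and let A ⊆ R. Then the projection map η sending a point (p_1,…,p_n) to the point (p_1,…,p_k) and a line [l_1,…,l_n] to the line [l_1,…,l_k] is a covering map from BΓ_n[A] (built from f_2,…,f_n) onto BΓ_k[A] (built from f_2,…,f_k): η is surjective, η preserves adjacency, and for every vertex v of BΓ_n[A] the restriction of η to the neighborhood of v is a bijection onto the neighborhood of η(v). -/

import Mathlib

/-- The adjacency condition of the graph `BΓ(R; f₂, …, f_n)`. -/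
def bAdj {R : Type} [CommRing R] (n : ℕ)
    (f : (i : ℕ) → (Fin i → R) → (Fin i → R) → R)
    (p l : Fin n → R) : Prop :=
  ∀ i : Fin n, 1 ≤ (i : ℕ) →
    p i + l i = f i (fun j => p (Fin.castLE i.isLt.le j))
                    (fun j => l (Fin.castLE i.isLt.le j))

/-- The bipartite graph `BΓ(R; f₂, …, f_n)`. -/
def BGamma (R : Type) [CommRing R] (n : ℕ)
    (f : (i : ℕ) → (Fin i → R) → (Fin i → R) → R) :
    SimpleGraph ((Fin n → R) ⊕ (Fin n → R)) :=
  SimpleGraph.fromRel (fun x y => ∃ p l, x = Sum.inl p ∧ y = Sum.inr l ∧ bAdj n f p l)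

/-- Truncation of a vector to its first `k` coordinates. -/
def truncFun {R : Type} {n k : ℕ} (h : k ≤ n) (v : Fin n → R) : Fin k → R :=
  fun j => v (Fin.castLE h j)

/-- The set of vertices (points and lines) whose first coordinate lies in `A`;
`BΓ_n[A]` is the subgraph induced on this set. -/
def firstIn (R : Type) [CommRing R] (A : Set R) (n : ℕ) (hn : 0 < n) :
    Set ((Fin n → R) ⊕ (Fin n → R)) :=
  {v | Sum.elim (fun p : Fin n → R => p ⟨0, hn⟩) (fun l : Fin n → R => l ⟨0, hn⟩) v ∈ A}

/-- The projection `η` keeping the first `k` coordinates of points and of lines, as a map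
between the vertex sets of `BΓ_n[A]` and `BΓ_k[A]`. -/
def eta (R : Type) [CommRing R] (A : Set R) {n k : ℕ} (h : k ≤ n) (hk : 0 < k) (hn : 0 < n)
    (v : firstIn R A n hn) : firstIn R A k hk :=
  ⟨Sum.map (truncFun h) (truncFun h) v.1, by
    obtain ⟨x, hx⟩ := v
    cases x with
    | inl p => exact hx
    | inr l => exact hx⟩

/-!
Adjacency in `BΓ` is a triangular system: once a point `p` is fixed, each coordinate `lᵢ` of an
adjacent line is determined by the earlier ones, `lᵢ = fᵢ(p₁, l₁, …) - pᵢ`, and symmetrically for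
the points on a fixed line. Hence a neighbour of the truncation of `p` extends, by solving the
remaining equations one after another, to a unique neighbour of `p`: truncation maps neighbourhoods
bijectively. Since `η` keeps the first coordinate, restricting both graphs to the vertices with
first coordinate in `A` preserves this.
-/

namespace Fin

variable {α : Type*} {n k : ℕ}

theorem existsUnique_forall_eq_take (F : (i : Fin n) → (Fin i → α) → α) :
    ∃! x : Fin n → α, ∀ i, x i = F i (take i i.isLt.le x) := by
  refine ⟨wellFounded_lt.fix fun i x ↦ F i fun j ↦ x (castLE i.isLt.le j) j.isLt,
    fun i ↦ wellFounded_lt.fix_eq _ i, fun y hy ↦ funext fun i ↦ ?_⟩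
  induction i using WellFoundedLT.induction with
  | ind i ih =>
    rw [hy, wellFounded_lt.fix_eq]
    exact congrArg (F i) (funext fun j ↦ ih _ j.isLt)

theorem existsUnique_take_eq_forall_le (h : k ≤ n) (m : Fin k → α)
    (g : (i : Fin n) → (Fin i → α) → α) :
    ∃! x : Fin n → α, take k h x = m ∧ ∀ i : Fin n, k ≤ i → x i = g i (take i i.isLt.le x) := by
  refine (existsUnique_congr fun x ↦ ?_).1 <| existsUnique_forall_eq_take
    fun i w ↦ if hi : (i : ℕ) < k then m ⟨i, hi⟩ else g i w
  constructor
  · intro hx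
    refine ⟨funext fun j ↦ ?_, fun i hi ↦ ?_⟩
    · simpa [j.isLt] using hx (castLE h j)
    · simpa [not_lt.2 hi] using hx i
  · rintro ⟨rfl, hg⟩ i
    split_ifs with hi
    · rfl
    · exact hg i (not_lt.1 hi)

end Fin

namespace Set

variable {α β γ δ : Type*} {a : α → γ} {b : β → δ}

theorem BijOn.sumMap_image_inl {s : Set α} {t : Set γ} (ha : BijOn a s t) :
    BijOn (Sum.map a b) (Sum.inl '' s) (Sum.inl '' t) :=
  (bijOn_comp_iff Sum.inl_injective.injOn).1 (Sum.inl_injective.injOn.bijOn_image.comp ha)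

theorem BijOn.sumMap_image_inr {s : Set β} {t : Set δ} (hb : BijOn b s t) :
    BijOn (Sum.map a b) (Sum.inr '' s) (Sum.inr '' t) :=
  (bijOn_comp_iff Sum.inr_injective.injOn).1 (Sum.inr_injective.injOn.bijOn_image.comp hb)

end Set

namespace SimpleGraph

variable {V W : Type*} {G : SimpleGraph V} {G' : SimpleGraph W} {φ : V → W} {s : Set V}
  {t : Set W}

theorem bijOn_induce_neighborSet (ψ : s → t) (hψ : ∀ x, (ψ x : W) = φ x) (hs : ∀ x, x ∈ s ↔ φ x ∈ t)
    {v : s} (hv : Set.BijOn φ (G.neighborSet v) (G'.neighborSet (φ v))) :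
    Set.BijOn ψ ((G.induce s).neighborSet v) ((G'.induce t).neighborSet (ψ v)) := by
  refine ⟨fun u hu ↦ ?_, fun u hu u' hu' huu' ↦ ?_, fun w hw ↦ ?_⟩
  · simpa [hψ] using hv.mapsTo hu
  · exact Subtype.ext (hv.injOn hu hu' (by simpa [hψ] using congrArg Subtype.val huu'))
  · have hw' : (w : W) ∈ G'.neighborSet (φ v) := by simpa [hψ] using hw
    obtain ⟨x, hx, hxw⟩ := hv.surjOn hw'
    exact ⟨⟨x, (hs x).2 (hxw ▸ w.2)⟩, hx, Subtype.ext (by simp [hψ, hxw])⟩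

end SimpleGraph

section BGamma

variable {R : Type} [CommRing R] {n k : ℕ} (f : (i : ℕ) → (Fin i → R) → (Fin i → R) → R)

theorem bAdj_comm {p l : Fin n → R} : bAdj n f p l ↔ bAdj n (fun i a b ↦ f i b a) l p := by
  simp only [bAdj, add_comm]

theorem bAdj_iff_truncFun (hk : 0 < k) (h : k ≤ n) {p l : Fin n → R} :
    bAdj n f p l ↔ bAdj k f (truncFun h p) (truncFun h l) ∧
      ∀ i : Fin n, k ≤ i → p i + l i = f i (Fin.take i i.isLt.le p) (Fin.take i i.isLt.le l) := by
  refine ⟨fun hpl ↦ ⟨fun i hi ↦ hpl (Fin.castLE h i) hi, fun i hi ↦ hpl i (by omega)⟩,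
    fun ⟨hlow, hhigh⟩ i hi ↦ ?_⟩
  by_cases hik : (i : ℕ) < k
  · exact hlow ⟨i, hik⟩ hi
  · exact hhigh i (not_lt.1 hik)

theorem bijOn_truncFun_setOf_bAdj_right (hk : 0 < k) (h : k ≤ n) (p : Fin n → R) :
    Set.BijOn (truncFun h) {l | bAdj n f p l} {m | bAdj k f (truncFun h p) m} := by
  set g : (i : Fin n) → (Fin i → R) → R := fun i w ↦ f i (Fin.take i i.isLt.le p) w - p i
  have key : ∀ l, bAdj n f p l ↔ bAdj k f (truncFun h p) (truncFun h l) ∧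
      ∀ i : Fin n, k ≤ i → l i = g i (Fin.take i i.isLt.le l) := by
    simp only [bAdj_iff_truncFun f hk h, g, eq_sub_iff_add_eq', implies_true]
  refine ⟨fun l hl ↦ ((key l).1 hl).1, fun l hl l' hl' hll' ↦ ?_, fun m hm ↦ ?_⟩
  · exact (Fin.existsUnique_take_eq_forall_le h (truncFun h l) g).unique
      ⟨rfl, ((key l).1 hl).2⟩ ⟨hll'.symm, ((key l').1 hl').2⟩
  · obtain ⟨x, ⟨rfl, hx⟩, -⟩ := Fin.existsUnique_take_eq_forall_le h m g
    exact ⟨x, (key x).2 ⟨hm, hx⟩, rfl⟩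

theorem bijOn_truncFun_setOf_bAdj_left (hk : 0 < k) (h : k ≤ n) (l : Fin n → R) :
    Set.BijOn (truncFun h) {p | bAdj n f p l} {m | bAdj k f m (truncFun h l)} := by
  simpa only [bAdj_comm f] using bijOn_truncFun_setOf_bAdj_right (fun i a b ↦ f i b a) hk h l

theorem neighborSet_bGamma_inl (p : Fin n → R) :
    (BGamma R n f).neighborSet (Sum.inl p) = Sum.inr '' {l | bAdj n f p l} := by
  ext (q | l) <;> simp [BGamma]

theorem neighborSet_bGamma_inr (l : Fin n → R) :
    (BGamma R n f).neighborSet (Sum.inr l) = Sum.inl '' {p | bAdj n f p l} := by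
  ext (p | m) <;> simp [BGamma]

theorem bijOn_sumMap_truncFun_neighborSet (hk : 0 < k) (h : k ≤ n)
    (v : (Fin n → R) ⊕ (Fin n → R)) :
    Set.BijOn (Sum.map (truncFun h) (truncFun h)) ((BGamma R n f).neighborSet v)
      ((BGamma R k f).neighborSet (Sum.map (truncFun h) (truncFun h) v)) := by
  cases v with
  | inl p =>
    rw [Sum.map_inl, neighborSet_bGamma_inl, neighborSet_bGamma_inl]
    exact (bijOn_truncFun_setOf_bAdj_right f hk h p).sumMap_image_inr
  | inr l =>
    rw [Sum.map_inr, neighborSet_bGamma_inr, neighborSet_bGamma_inr]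
    exact (bijOn_truncFun_setOf_bAdj_left f hk h l).sumMap_image_inl

end BGamma

/-- The projection `η` is a covering map from `BΓ_n[A]` onto `BΓ_k[A]`: it is surjective,
preserves adjacency, and restricts to a bijection between neighborhoods. -/
theorem statement_3 (R : Type) [CommRing R] (n k : ℕ)
    (hk : 2 ≤ k) (hkn : k < n)
    (f : (i : ℕ) → (Fin i → R) → (Fin i → R) → R) (A : Set R) :
    Function.Surjective (eta R A hkn.le (by omega) (by omega)) ∧
    (∀ u v : firstIn R A n (by omega),
      ((BGamma R n f).induce (firstIn R A n (by omega))).Adj u v →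
      ((BGamma R k f).induce (firstIn R A k (by omega))).Adj
        (eta R A hkn.le (by omega) (by omega) u) (eta R A hkn.le (by omega) (by omega) v)) ∧
    (∀ v : firstIn R A n (by omega),
      Set.BijOn (eta R A hkn.le (by omega) (by omega))
        (((BGamma R n f).induce (firstIn R A n (by omega))).neighborSet v)
        (((BGamma R k f).induce (firstIn R A k (by omega))).neighborSet
          (eta R A hkn.le (by omega) (by omega) v))) := by
  have hmem : ∀ x, x ∈ firstIn R A n (by omega) ↔
      Sum.map (truncFun hkn.le) (truncFun hkn.le) x ∈ firstIn R A k (by omega) := by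
    rintro (p | l) <;> rfl
  have htrunc : Function.Surjective (truncFun (R := R) hkn.le) :=
    (Fin.castLE_injective hkn.le).surjective_comp_right
  have hbij (v : firstIn R A n (by omega)) := SimpleGraph.bijOn_induce_neighborSet
    (eta R A hkn.le (by omega) (by omega)) (fun _ ↦ rfl) hmem
    (bijOn_sumMap_truncFun_neighborSet f (by omega) hkn.le v)
  refine ⟨fun ⟨w, hw⟩ ↦ ?_, fun u _ huv ↦ (hbij u).mapsTo huv, hbij⟩
  obtain ⟨x, rfl⟩ := Sum.map_surjective.2 ⟨htrunc, htrunc⟩ w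
  exact ⟨⟨x, (hmem x).2 hw⟩, rfl⟩
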